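/- arXiv:2311.12698 — 4 statements merged into one kernel-verified Lean document; each statement's English description precedes it below -/
import Mathlib

section
/- Let X be a finite set of locations, O a finite set of observations, and M a finite set of scenarios with nonnegative weights p_ω, where each scenario ω ∈ M is given by a map ω : X → O, and write ψ_ω(T) = {(v, ω(v)) : v ∈ T} ⊆ X × O for T ⊆ X. Let f : 2^{X×O} → ℝ be a monotone submodular set function with maximum value Q. Fix S ⊆ X, and let 𝒵 be a finite collection of subsets Z ⊆ M such that all scenarios in Z agree at every location of S (so ψ_Z(S) := ψ_ω(S) for any ω ∈ Z is well defined) and f(ψ_Z(S)) < Q. For each v ∈ X and Z ∈ 𝒵 fix a subset L_v(Z) ⊆ Z, and set L_T(Z) = ∪_{v∈T} L_v(Z). Then the set function g(T) = Σ_{Z∈𝒵} ( Σ_{ω ∈ L_T(Z)} p_ω + Σ_{ω∈Z} p_ω · (f(ψ_Z(S) ∪ ψ_ω(T)) − f(ψ_Z(S))) / (Q − f(ψ_Z(S))) ), defined for T ⊆ X, is nonnegative, monotone, and submodular. -/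
/-- A real-valued set function on finite subsets of `α` is monotone if it is
nondecreasing with respect to inclusion. -/
def IsMonotoneSetFn {α : Type*} [DecidableEq α] (f : Finset α → ℝ) : Prop :=
  ∀ A B : Finset α, A ⊆ B → f A ≤ f B

/-- A real-valued set function on finite subsets of `α` is submodular if the marginal
gain of adding a new element to a smaller set is at least that of adding it to a larger set. -/
def IsSubmodularSetFn {α : Type*} [DecidableEq α] (f : Finset α → ℝ) : Prop :=
  ∀ A B : Finset α, A ⊆ B → ∀ e, e ∉ B →
    f (insert e B) - f B ≤ f (insert e A) - f A

private lemma submod_insert' {α : Type*} [DecidableEq α] {f : Finset α → ℝ}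
    (hmono : IsMonotoneSetFn f) (hsub : IsSubmodularSetFn f)
    {A B : Finset α} (hAB : A ⊆ B) (x : α) :
    f (insert x B) - f B ≤ f (insert x A) - f A := by
  by_cases hx : x ∈ B
  · rw [Finset.insert_eq_self.2 hx]
    have := hmono A (insert x A) (Finset.subset_insert x A)
    linarith
  · exact hsub A B hAB x hx

private lemma cover_diff' {Ω : Type*} [DecidableEq Ω] (p : Ω → ℝ)
    (Le U : Finset Ω) :
    (∑ ω ∈ Le ∪ U, p ω) - ∑ ω ∈ U, p ω = ∑ ω ∈ Le \ U, p ω := by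
  rw [Finset.union_comm, ← Finset.union_sdiff_self_eq_union,
    Finset.sum_union Finset.sdiff_disjoint.symm]
  ring

/-- the score function
`g(T) = Σ_{Z∈𝒵} ( Σ_{ω ∈ L_T(Z)} p_ω + Σ_{ω∈Z} p_ω · (f(ψ_Z(S) ∪ ψ_ω(T)) − f(ψ_Z(S))) / (Q − f(ψ_Z(S))) )`
is nonnegative, monotone and submodular. Here scenarios are a finite type `Ω` with
nonnegative weights `p`, each scenario `ω` determines observations `obs ω : X → O`,
`ψ_ω(T) = {(v, obs ω v) : v ∈ T}`, `f` is a monotone submodular function on subsets of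
`X × O` with maximum value `Q`, every `Z ∈ 𝒵` has all its scenarios agreeing on `S`
(with common partial realization `ψZ Z`) and `f(ψZ Z) < Q`, and `L v Z ⊆ Z` with
`L_T(Z) = ∪_{v∈T} L v Z`. -/
theorem score_function_nonneg_monotone_submodular
    {X O Ω : Type*} [Fintype X] [DecidableEq X] [Fintype O] [DecidableEq O]
    [Fintype Ω] [DecidableEq Ω]
    (p : Ω → ℝ) (hp : ∀ ω, 0 ≤ p ω)
    (obs : Ω → X → O)
    (f : Finset (X × O) → ℝ) (Q : ℝ)
    (hmono : IsMonotoneSetFn f) (hsub : IsSubmodularSetFn f)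
    (hfQ : ∀ ψ : Finset (X × O), f ψ ≤ Q)
    (S : Finset X)
    (𝒵 : Finset (Finset Ω))
    (ψZ : Finset Ω → Finset (X × O))
    (hψZ : ∀ Z ∈ 𝒵, ∀ ω ∈ Z, ψZ Z = S.image (fun v => (v, obs ω v)))
    (hZQ : ∀ Z ∈ 𝒵, f (ψZ Z) < Q)
    (L : X → Finset Ω → Finset Ω) (hL : ∀ v Z, L v Z ⊆ Z) :
    let g : Finset X → ℝ := fun T =>
      ∑ Z ∈ 𝒵,
        ((∑ ω ∈ T.biUnion (fun v => L v Z), p ω) +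
          ∑ ω ∈ Z, p ω *
            (f (ψZ Z ∪ T.image (fun v => (v, obs ω v))) - f (ψZ Z)) / (Q - f (ψZ Z)))
    (∀ T, 0 ≤ g T) ∧ IsMonotoneSetFn g ∧ IsSubmodularSetFn g := by
  intro g
  have hgmono : IsMonotoneSetFn g := by
    intro A B hAB
    apply Finset.sum_le_sum
    intro Z hZ
    have hD : 0 < Q - f (ψZ Z) := sub_pos.2 (hZQ Z hZ)
    refine add_le_add ?_ ?_
    · apply Finset.sum_le_sum_of_subset_of_nonneg
      · exact Finset.biUnion_subset_biUnion_of_subset_left _ hAB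
      · intro ω _ _; exact hp ω
    · apply Finset.sum_le_sum
      intro ω hω
      have hpω := hp ω
      have hfle : f (ψZ Z ∪ A.image (fun v => (v, obs ω v))) ≤
          f (ψZ Z ∪ B.image (fun v => (v, obs ω v))) :=
        hmono _ _ (Finset.union_subset_union_right (Finset.image_subset_image hAB))
      gcongr
  have hg0 : g ∅ = 0 := by
    simp [g]
  refine ⟨fun T => hg0 ▸ hgmono ∅ T (Finset.empty_subset T), hgmono, ?_⟩
  intro A B hAB e he
  simp only [g]
  rw [← Finset.sum_sub_distrib, ← Finset.sum_sub_distrib]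
  apply Finset.sum_le_sum
  intro Z hZ
  have hD : 0 < Q - f (ψZ Z) := sub_pos.2 (hZQ Z hZ)
  -- coverage part
  have hcov : (∑ ω ∈ (insert e B).biUnion (fun v => L v Z), p ω) -
        (∑ ω ∈ B.biUnion (fun v => L v Z), p ω)
      ≤ (∑ ω ∈ (insert e A).biUnion (fun v => L v Z), p ω) -
        (∑ ω ∈ A.biUnion (fun v => L v Z), p ω) := by
    rw [Finset.biUnion_insert, Finset.biUnion_insert, cover_diff' p, cover_diff' p]
    apply Finset.sum_le_sum_of_subset_of_nonneg
    · exact Finset.sdiff_subset_sdiff (le_refl _)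
        (Finset.biUnion_subset_biUnion_of_subset_left _ hAB)
    · intro ω _ _; exact hp ω
  -- f part
  have hfsum : (∑ ω ∈ Z, p ω *
        (f (ψZ Z ∪ (insert e B).image (fun v => (v, obs ω v))) - f (ψZ Z)) / (Q - f (ψZ Z))) -
      (∑ ω ∈ Z, p ω *
        (f (ψZ Z ∪ B.image (fun v => (v, obs ω v))) - f (ψZ Z)) / (Q - f (ψZ Z)))
      ≤ (∑ ω ∈ Z, p ω *
        (f (ψZ Z ∪ (insert e A).image (fun v => (v, obs ω v))) - f (ψZ Z)) / (Q - f (ψZ Z))) -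
      (∑ ω ∈ Z, p ω *
        (f (ψZ Z ∪ A.image (fun v => (v, obs ω v))) - f (ψZ Z)) / (Q - f (ψZ Z))) := by
    rw [← Finset.sum_sub_distrib, ← Finset.sum_sub_distrib]
    apply Finset.sum_le_sum
    intro ω hω
    have hpω := hp ω
    set x : X × O := (e, obs ω e)
    have himA : (insert e A).image (fun v => (v, obs ω v)) =
        insert x (A.image (fun v => (v, obs ω v))) := Finset.image_insert _ _ _
    have himB : (insert e B).image (fun v => (v, obs ω v)) =
        insert x (B.image (fun v => (v, obs ω v))) := Finset.image_insert _ _ _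
    rw [himA, himB, Finset.union_insert, Finset.union_insert]
    have hd : f (insert x (ψZ Z ∪ B.image (fun v => (v, obs ω v)))) -
          f (ψZ Z ∪ B.image (fun v => (v, obs ω v))) ≤
        f (insert x (ψZ Z ∪ A.image (fun v => (v, obs ω v)))) -
          f (ψZ Z ∪ A.image (fun v => (v, obs ω v))) :=
      submod_insert' hmono hsub
        (Finset.union_subset_union_right (Finset.image_subset_image hAB)) x
    set CA := ψZ Z ∪ A.image (fun v => (v, obs ω v))
    set CB := ψZ Z ∪ B.image (fun v => (v, obs ω v))
    have hkey : ∀ u v : ℝ,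
        p ω * (u - f (ψZ Z)) / (Q - f (ψZ Z)) - p ω * (v - f (ψZ Z)) / (Q - f (ψZ Z)) =
        p ω * (u - v) / (Q - f (ψZ Z)) := by
      intro u v
      field_simp
      ring
    rw [hkey, hkey]
    gcongr
  linarith
end

section
/- Let (a_i)_{i≥0} and (o_i)_{i≥0} be sequences of nonnegative reals with a_0 = o_0 = 1, and suppose A := Σ_{i≥0} a_i < ∞ and O := Σ_{i≥0} o_i < ∞. Let c > 1 be a real number such that for every i ≥ 0, c · Σ_{j≥i} (a_{j+1} − 2 o_{j+1})/(j+1) ≤ a_i (the series on the left converges absolutely since A and O are finite). Then A ≤ (2c/(c−1)) · O. -/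
/-! Writing `d n = a (n+1) - 2 o (n+1)`, summing the hypothesis over `i` counts the term
`d n / (n+1)` once for each of the `n+1` pairs `(i, j)` with `i + j = n`, so the double sum is
`∑ d n = (A - 1) - 2 (O - 1)`. Hence `c (A - 2O + 1) ≤ A`, i.e. `(c - 1) A ≤ 2cO - c ≤ 2cO`. -/

open Finset.HasAntidiagonal

theorem sum_antidiagonal_comp_add {M : Type*} [AddCommMonoid M] (g : ℕ → M) (n : ℕ) :
    ∑ p : antidiagonal n, g (p.1.1 + p.1.2) = (n + 1) • g n := by
  rw [Finset.sum_coe_sort (antidiagonal n) fun p => g (p.1 + p.2),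
    Finset.sum_congr rfl fun p hp => by rw [mem_antidiagonal.mp hp], Finset.sum_const,
    Finset.Nat.card_antidiagonal]

theorem HasSum.succ_nsmul_of_prod_add {M : Type*} [AddCommMonoid M] [TopologicalSpace M]
    [ContinuousAdd M] [RegularSpace M] {g : ℕ → M} {s : M}
    (h : HasSum (fun p : ℕ × ℕ => g (p.1 + p.2)) s) :
    HasSum (fun n => (n + 1) • g n) s := by
  rw [← (sigmaAntidiagonalEquivProd (A := ℕ)).hasSum_iff] at h
  exact h.sigma fun n => by
    rw [← sum_antidiagonal_comp_add]
    exact hasSum_fintype _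

theorem summable_prod_add_of_summable_succ_mul_norm {E : Type*} [NormedAddCommGroup E]
    [CompleteSpace E] {g : ℕ → E} (h : Summable fun n : ℕ => ((n : ℝ) + 1) * ‖g n‖) :
    Summable fun p : ℕ × ℕ => g (p.1 + p.2) := by
  refine Summable.of_norm ?_
  rw [← (sigmaAntidiagonalEquivProd (A := ℕ)).summable_iff, Function.comp_def,
    summable_sigma_of_nonneg fun _ => norm_nonneg _]
  simp only [sigmaAntidiagonalEquivProd_apply]
  refine ⟨fun _ => .of_finite, h.congr fun n => ?_⟩
  rw [tsum_fintype, sum_antidiagonal_comp_add (fun m => ‖g m‖), nsmul_eq_mul, Nat.cast_succ]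

theorem hasSum_prod_add_div_succ {d : ℕ → ℝ} (hd : Summable d) :
    HasSum (fun p : ℕ × ℕ => d (p.1 + p.2) / ((p.1 + p.2 + 1 : ℕ) : ℝ)) (∑' n, d n) := by
  set g : ℕ → ℝ := fun n => d n / ((n + 1 : ℕ) : ℝ)
  have hg_succ (n : ℕ) : (n + 1) • g n = d n := by
    rw [nsmul_eq_mul, mul_div_cancel₀ _ (by positivity)]
  have hg : Summable fun p : ℕ × ℕ => g (p.1 + p.2) :=
    summable_prod_add_of_summable_succ_mul_norm <| hd.norm.congr fun n => by
      rw [← hg_succ, RCLike.norm_nsmul ℝ, nsmul_eq_mul, Nat.cast_succ]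
  have h_sum := hg.hasSum.succ_nsmul_of_prod_add
  simp only [hg_succ] at h_sum
  rw [h_sum.tsum_eq]
  exact hg.hasSum

theorem noncompletion_probability_bound_general
    (a o : ℕ → ℝ)
    (ha0 : a 0 = 1) (ho0 : o 0 = 1)
    (hA : Summable a) (hO : Summable o)
    (c : ℝ) (hc : 1 < c)
    (hkey : ∀ i : ℕ,
      c * ∑' j : ℕ, (a (i + j + 1) - 2 * o (i + j + 1)) / ((i + j + 1 : ℕ) : ℝ) ≤ a i) :
    ∑' i : ℕ, a i ≤ (2 * c / (c - 1)) * ∑' i : ℕ, o i := by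
  set d : ℕ → ℝ := fun n => a (n + 1) - 2 * o (n + 1)
  have hA' := (summable_nat_add_iff 1).2 hA
  have hO' := ((summable_nat_add_iff 1).2 hO).mul_left 2
  have hd := hasSum_prod_add_div_succ (hA'.sub hO')
  have hsum : c * ∑' n, d n ≤ ∑' i, a i := by
    rw [← hd.tsum_eq, hd.summable.tsum_prod, ← tsum_mul_left]
    exact (hd.summable.prod.mul_left c).tsum_le_tsum hkey hA
  have hd_eq : ∑' n, d n = ∑' i, a i - 2 * ∑' i, o i + 1 := by
    rw [hA'.tsum_sub hO', tsum_mul_left, hA.tsum_eq_zero_add, hO.tsum_eq_zero_add, ha0, ho0]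
    ring
  rw [hd_eq] at hsum
  rw [div_mul_eq_mul_div, le_div_iff₀ (by linarith)]
  linarith

/-- if `(a_i)` and `(o_i)` are summable nonnegative sequences with
`a_0 = o_0 = 1`, and `c > 1` satisfies
`c · Σ_{j≥i} (a_{j+1} − 2 o_{j+1})/(j+1) ≤ a_i` for every `i ≥ 0`, then
`Σ_i a_i ≤ (2c/(c−1)) · Σ_i o_i`. -/
theorem noncompletion_probability_bound
    (a o : ℕ → ℝ)
    (ha0 : a 0 = 1) (ho0 : o 0 = 1)
    (han : ∀ i, 0 ≤ a i) (hon : ∀ i, 0 ≤ o i)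
    (hA : Summable a) (hO : Summable o)
    (c : ℝ) (hc : 1 < c)
    (hkey : ∀ i : ℕ,
      c * ∑' j : ℕ, (a (i + j + 1) - 2 * o (i + j + 1)) / ((i + j + 1 : ℕ) : ℝ) ≤ a i) :
    ∑' i : ℕ, a i ≤ (2 * c / (c - 1)) * ∑' i : ℕ, o i :=
  noncompletion_probability_bound_general a o ha0 ho0 hA hO c hc hkey
end

section
/- Let Q ≥ 1 be an integer and let 0 = q_0 ≤ q_1 ≤ ⋯ ≤ q_ℓ ≤ Q be integers with q_{p−1} ≤ Q − 1 for every p ∈ {1, …, ℓ}. Then Σ_{p=1}^{ℓ} (q_p − q_{p−1})/(Q − q_{p−1}) ≤ Σ_{j=1}^{Q} 1/j. -/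
/-! Each relative gain is dominated by a block of the harmonic series: since every
`1 / j` with `a < j ≤ b` is at least `1 / b`, we get `(b - a) / b ≤ H_b - H_a`.
Applied with `b = Q - q_{p-1}` and `a = Q - q_p`, these blocks telescope to
`H_Q - H_{Q - q_ℓ} ≤ H_Q`. -/

open Finset

lemma sub_div_le_harmonic_sub {a b : ℕ} (hab : a ≤ b) :
    ((b : ℝ) - a) / b ≤ harmonic b - harmonic a := by
  induction b, hab using Nat.le_induction with
  | base => simp
  | succ b hab ih =>
    have hdrop : ((b : ℝ) - a) / (b + 1) ≤ ((b : ℝ) - a) / b := by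
      rcases Nat.eq_zero_or_pos b with rfl | hb
      · simp [Nat.le_zero.mp hab]
      · exact div_le_div_of_nonneg_left (sub_nonneg.2 (by exact_mod_cast hab))
          (by exact_mod_cast hb) (by linarith)
    calc ((↑(b + 1) : ℝ) - a) / ↑(b + 1) = ((b : ℝ) - a) / (b + 1) + (b + 1 : ℝ)⁻¹ := by
          push_cast; field_simp; ring
      _ ≤ harmonic (b + 1) - harmonic a := by
          rw [harmonic_succ]; push_cast; linarith

lemma sum_Icc_sub_div_le_harmonic_sub (g : ℕ → ℕ) (ℓ : ℕ)
    (hg : ∀ p < ℓ, g (p + 1) ≤ g p) :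
    ∑ p ∈ Icc 1 ℓ, ((g (p - 1) : ℝ) - g p) / g (p - 1) ≤ harmonic (g 0) - harmonic (g ℓ) := by
  induction ℓ with
  | zero => simp
  | succ ℓ ih =>
    rw [sum_Icc_succ_top (by omega), Nat.add_sub_cancel]
    have := ih fun p hp => hg p (by omega)
    have := sub_div_le_harmonic_sub (hg ℓ (by omega))
    linarith

theorem relative_gain_harmonic_bound_general
    (Q : ℕ) (ℓ : ℕ) (q : ℕ → ℤ)
    (hq0 : q 0 = 0)
    (hmono : ∀ p, p < ℓ → q p ≤ q (p + 1))
    (hqℓ : q ℓ ≤ (Q : ℤ))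
    (hlt : ∀ p, 1 ≤ p → p ≤ ℓ → q (p - 1) ≤ (Q : ℤ) - 1) :
    ∑ p ∈ Finset.Icc 1 ℓ, ((q p : ℝ) - (q (p - 1) : ℝ)) / ((Q : ℝ) - (q (p - 1) : ℝ)) ≤
      ∑ j ∈ Finset.Icc 1 Q, (1 : ℝ) / (j : ℝ) := by
  set g : ℕ → ℕ := fun p => (Q - q p).toNat
  have hqQ : ∀ p ≤ ℓ, q p ≤ Q := fun p hp => by
    rcases hp.lt_or_eq with hp | rfl
    · simpa using (hlt (p + 1) (by omega) hp).trans (by omega)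
    · exact hqℓ
  have hg : ∀ p ≤ ℓ, (g p : ℝ) = Q - q p := fun p hp => by
    have : ((Q - q p).toNat : ℤ) = Q - q p := Int.toNat_of_nonneg (by linarith [hqQ p hp])
    exact_mod_cast this
  calc ∑ p ∈ Icc 1 ℓ, ((q p : ℝ) - q (p - 1)) / (Q - q (p - 1))
      = ∑ p ∈ Icc 1 ℓ, ((g (p - 1) : ℝ) - g p) / g (p - 1) := sum_congr rfl fun p hp => by
        rw [mem_Icc] at hp
        rw [hg p hp.2, hg (p - 1) (by omega)]
        ring
    _ ≤ harmonic (g 0) - harmonic (g ℓ) :=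
        sum_Icc_sub_div_le_harmonic_sub g ℓ fun p hp => Int.toNat_le_toNat (by linarith [hmono p hp])
    _ ≤ harmonic Q := by
        have : g 0 = Q := by simp [g, hq0]
        rw [this, sub_le_self_iff, harmonic_eq_sum_Icc]
        push_cast
        positivity
    _ = ∑ j ∈ Icc 1 Q, (1 : ℝ) / j := by simp [harmonic_eq_sum_Icc]

/-- for an integer `Q ≥ 1` and integers `0 = q_0 ≤ q_1 ≤ ⋯ ≤ q_ℓ ≤ Q`
with `q_{p−1} ≤ Q − 1` for all `p ∈ {1,…,ℓ}`, the relative-gain sum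
`Σ_{p=1}^ℓ (q_p − q_{p−1})/(Q − q_{p−1})` is at most the harmonic number `Σ_{j=1}^Q 1/j`. -/
theorem relative_gain_harmonic_bound
    (Q : ℕ) (hQ : 1 ≤ Q) (ℓ : ℕ) (q : ℕ → ℤ)
    (hq0 : q 0 = 0)
    (hmono : ∀ p, p < ℓ → q p ≤ q (p + 1))
    (hqℓ : q ℓ ≤ (Q : ℤ))
    (hlt : ∀ p, 1 ≤ p → p ≤ ℓ → q (p - 1) ≤ (Q : ℤ) - 1) :
    ∑ p ∈ Finset.Icc 1 ℓ, ((q p : ℝ) - (q (p - 1) : ℝ)) / ((Q : ℝ) - (q (p - 1) : ℝ)) ≤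
      ∑ j ∈ Finset.Icc 1 Q, (1 : ℝ) / (j : ℝ) :=
  relative_gain_harmonic_bound_general Q ℓ q hq0 hmono hqℓ hlt
end

section
/- Let Q ≥ 1 be an integer, η ∈ (0, 1], and let 0 = q_0 ≤ q_1 ≤ ⋯ ≤ q_ℓ ≤ Q be reals such that q_{p−1} ≤ (1 − η)·Q for every p ∈ {1, …, ℓ}. Then Σ_{p=1}^{ℓ} (q_p − q_{p−1})/(Q − q_{p−1}) ≤ 1 + ln(1/η). -/
/-!
Each relative gain `(q_p - q_{p-1}) / (Q - q_{p-1})` is at most the drop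
`log (Q - q_{p-1}) - log (Q - q_p)` of the logarithm of the remaining deficit, as long as that
deficit stays positive. The deficit is at least `η Q` up to `q_{ℓ-1}`, so all gains but the last
telescope to at most `log Q - log (η Q) = log (1 / η)`; the last gain is at most `1` since
`q_ℓ ≤ Q`.
-/

open Finset Real

theorem Real.sub_div_le_log_sub_log {x y : ℝ} (hx : 0 < x) (hy : 0 < y) :
    (x - y) / x ≤ log x - log y := by
  have h := one_sub_inv_le_log_of_pos (div_pos hx hy)
  rwa [inv_div, log_div hx.ne' hy.ne', one_sub_div hx.ne'] at h

theorem sum_range_relative_gain_le_log_sub_log (Q : ℝ) (q : ℕ → ℝ) (n : ℕ)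
    (hpos : ∀ i ≤ n, 0 < Q - q i) :
    ∑ i ∈ range n, (q (i + 1) - q i) / (Q - q i) ≤ log (Q - q 0) - log (Q - q n) := by
  calc ∑ i ∈ range n, (q (i + 1) - q i) / (Q - q i)
      ≤ ∑ i ∈ range n, (log (Q - q i) - log (Q - q (i + 1))) := by
        refine sum_le_sum fun i hi => ?_
        have hin := mem_range.mp hi
        have h := sub_div_le_log_sub_log (hpos i hin.le) (hpos (i + 1) hin)
        rwa [sub_sub_sub_cancel_left] at h
    _ = log (Q - q 0) - log (Q - q n) := sum_range_sub' (fun i => log (Q - q i)) n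

theorem relative_gain_log_bound_general
    (Q : ℕ) (hQ : 1 ≤ Q) (η : ℝ) (hη0 : 0 < η) (hη1 : η ≤ 1)
    (ℓ : ℕ) (q : ℕ → ℝ)
    (hq0 : q 0 = 0)
    (hqℓ : q ℓ ≤ (Q : ℝ))
    (hlt : ∀ p, 1 ≤ p → p ≤ ℓ → q (p - 1) ≤ (1 - η) * (Q : ℝ)) :
    ∑ p ∈ Finset.Icc 1 ℓ, (q p - q (p - 1)) / ((Q : ℝ) - q (p - 1)) ≤
      1 + Real.log (1 / η) := by
  have hηQ : 0 < η * Q := mul_pos hη0 (by exact_mod_cast hQ)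
  have hlog : log (Q - q 0) - log (η * Q) = log (1 / η) := by
    rw [hq0, sub_zero, ← log_div (by positivity) hηQ.ne',
      div_mul_cancel_right₀ (by positivity), one_div]
  have hreindex : ∑ p ∈ Icc 1 ℓ, (q p - q (p - 1)) / ((Q : ℝ) - q (p - 1)) =
      ∑ i ∈ range ℓ, (q (i + 1) - q i) / (Q - q i) := by
    rw [← Ico_add_one_right_eq_Icc, sum_Ico_eq_sum_range, Nat.add_sub_cancel]
    simp only [add_comm 1, Nat.add_sub_cancel]
  rw [hreindex]
  cases ℓ with
  | zero =>
    rw [range_zero, sum_empty]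
    linarith [log_nonneg (one_le_one_div hη0 hη1)]
  | succ m =>
    have hdeficit : ∀ i ≤ m, η * Q ≤ Q - q i := fun i hi => by
      have := hlt (i + 1) (by omega) (by omega)
      rw [Nat.add_sub_cancel] at this
      linarith
    have hlast : (q (m + 1) - q m) / (Q - q m) ≤ 1 :=
      (div_le_one (hηQ.trans_le (hdeficit m le_rfl))).mpr (by linarith)
    have hfirst := sum_range_relative_gain_le_log_sub_log Q q m
      fun i hi => hηQ.trans_le (hdeficit i (by omega))
    have hdrop := log_le_log hηQ (hdeficit m le_rfl)
    rw [sum_range_succ]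
    linarith

/-- for an integer `Q ≥ 1`, `η ∈ (0,1]`, and reals
`0 = q_0 ≤ q_1 ≤ ⋯ ≤ q_ℓ ≤ Q` with `q_{p−1} ≤ (1−η)·Q` for all `p ∈ {1,…,ℓ}`,
the relative-gain sum `Σ_{p=1}^ℓ (q_p − q_{p−1})/(Q − q_{p−1})` is at most `1 + ln(1/η)`. -/
theorem relative_gain_log_bound
    (Q : ℕ) (hQ : 1 ≤ Q) (η : ℝ) (hη0 : 0 < η) (hη1 : η ≤ 1)
    (ℓ : ℕ) (q : ℕ → ℝ)
    (hq0 : q 0 = 0)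
    (hmono : ∀ p, p < ℓ → q p ≤ q (p + 1))
    (hqℓ : q ℓ ≤ (Q : ℝ))
    (hlt : ∀ p, 1 ≤ p → p ≤ ℓ → q (p - 1) ≤ (1 - η) * (Q : ℝ)) :
    ∑ p ∈ Finset.Icc 1 ℓ, (q p - q (p - 1)) / ((Q : ℝ) - q (p - 1)) ≤
      1 + Real.log (1 / η) :=
  relative_gain_log_bound_general Q hQ η hη0 hη1 ℓ q hq0 hqℓ hlt
end
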